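/- For π, ρ ∈ NC(n), d_H(π,ρ) = |π| + |ρ| − 2·c(π,ρ), where c(π,ρ) is the number of blocks of the join of π and ρ in the lattice of all set partitions of {1,...,n}. -/

import Mathlib

/-- A partition of `{1,...,n}` (modeled as a setoid on `Fin n`) is non-crossing. -/
def IsNoncrossing {n : ℕ} (s : Setoid (Fin n)) : Prop :=
  ∀ a b c d : Fin n, a < b → b < c → c < d → s.r a c → s.r b d → s.r a b

/-- `NC n`: the set of non-crossing partitions of `{1,...,n}`, ordered by reverse
refinement (the order induced from the refinement order on setoids). -/
abbrev NC (n : ℕ) := {s : Setoid (Fin n) // IsNoncrossing s}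

/-- The number of blocks of a partition. -/
noncomputable def blocks {n : ℕ} (s : Setoid (Fin n)) : ℕ := Nat.card (Quotient s)

/-- The Hasse diagram of `NC n`: vertices are non-crossing partitions, edges join
pairs where one covers the other. -/
def hasse (n : ℕ) : SimpleGraph (NC n) where
  Adj x y := x ⋖ y ∨ y ⋖ x
  symm := ⟨fun _ _ h => h.symm⟩
  loopless := ⟨fun x h => lt_irrefl x (h.elim CovBy.lt CovBy.lt)⟩

/-!
Write `gap π ρ = |π| + |ρ| - 2 |π ∨̃ ρ|`. A cover in `NC n` merges two blocks, and merging two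
blocks lowers the number of blocks of the join with `ρ` by at most one; hence `gap · ρ` changes
by at most one along an edge of the Hasse diagram, and `gap ≤ d_H` since `gap ρ ρ = 0`.

Conversely, take a pair `a < b` on which `π` and `ρ` disagree with `b - a` minimal, say `ρ a b`
but not `π a b`. Minimality forces `π` and `ρ` to agree inside the open interval `(a, b)`, and
makes `(a, b)` a union of blocks of `ρ`. If it is also a union of blocks of `π`, merging the
blocks of `a` and `b` in `π` is non-crossing and leaves the join unchanged; otherwise splitting
off the part inside `(a, b)` of a block of `π` that leaves the interval is non-crossing and
refines the join, because that part is a block of `ρ`. Either move lowers `gap` by at least one,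
so `d_H ≤ gap`. The same minimal pair argument, applied to `π < τ`, shows that covers are merges.
-/

namespace Setoid

variable {α : Type*}

theorem map_of_le_surjective {s t : Setoid α} (h : s ≤ t) :
    Function.Surjective (map_of_le h) :=
  Quotient.ind fun x => ⟨⟦x⟧, rfl⟩

def mergeClasses (s : Setoid α) (a b : α) : Setoid α where
  r x y := s x y ∨ ((s x a ∨ s x b) ∧ (s y a ∨ s y b))
  iseqv := by
    refine ⟨fun x => .inl (s.refl' x), ?_, ?_⟩
    · rintro x y (h | ⟨hx, hy⟩)
      exacts [.inl (s.symm' h), .inr ⟨hy, hx⟩]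
    · rintro x y z (hxy | ⟨hx, hy⟩) (hyz | ⟨hy', hz⟩)
      · exact .inl (s.trans' hxy hyz)
      · exact .inr ⟨hy'.imp (s.trans' hxy) (s.trans' hxy), hz⟩
      · exact .inr ⟨hx, hy.imp (s.trans' (s.symm' hyz)) (s.trans' (s.symm' hyz))⟩
      · exact .inr ⟨hx, hz⟩

variable {s t : Setoid α} {a b : α}

theorem rel_mergeClasses (s : Setoid α) (a b : α) : s.mergeClasses a b a b :=
  .inr ⟨.inl (s.refl' a), .inr (s.refl' b)⟩

theorem le_mergeClasses (s : Setoid α) (a b : α) : s ≤ s.mergeClasses a b :=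
  fun _ _ => .inl

theorem mergeClasses_le (hst : s ≤ t) (hab : t a b) : s.mergeClasses a b ≤ t := by
  have hmem : ∀ {x}, s x a ∨ s x b → t x a := fun h =>
    h.elim (hst ·) (fun hxb => t.trans' (hst hxb) (t.symm' hab))
  rintro x y (hxy | ⟨hx, hy⟩)
  exacts [hst hxy, t.trans' (hmem hx) (t.symm' (hmem hy))]

theorem mergeClasses_eq_self (hab : s a b) : s.mergeClasses a b = s :=
  le_antisymm (mergeClasses_le le_rfl hab) (le_mergeClasses s a b)

theorem lt_mergeClasses (hab : ¬ s a b) : s < s.mergeClasses a b :=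
  lt_of_le_of_ne (le_mergeClasses s a b) fun h => hab (h ▸ rel_mergeClasses s a b)

theorem mergeClasses_sup (s t : Setoid α) (a b : α) :
    s.mergeClasses a b ⊔ t = (s ⊔ t).mergeClasses a b := by
  apply le_antisymm
  · exact sup_le (mergeClasses_le (le_sup_left.trans (le_mergeClasses _ a b))
      (rel_mergeClasses _ a b)) (le_sup_right.trans (le_mergeClasses _ a b))
  · exact mergeClasses_le (sup_le_sup_right (le_mergeClasses s a b) t)
      (le_sup_left (a := s.mergeClasses a b) (rel_mergeClasses s a b))

def splitOff (s : Setoid α) (R : Set α) : Setoid α where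
  r x y := s x y ∧ (x ∈ R ↔ y ∈ R)
  iseqv := ⟨fun x => ⟨s.refl' x, .rfl⟩, fun h => ⟨s.symm' h.1, h.2.symm⟩,
    fun h g => ⟨s.trans' h.1 g.1, h.2.trans g.2⟩⟩

variable {R : Set α}

theorem splitOff_le (s : Setoid α) (R : Set α) : s.splitOff R ≤ s :=
  fun _ _ => And.left

theorem mergeClasses_splitOff {y t : α} (hyt : s y t) (hy : y ∈ R) (ht : t ∉ R)
    (hR : ∀ x ∈ R, s y x) : (s.splitOff R).mergeClasses y t = s := by
  refine le_antisymm (mergeClasses_le (splitOff_le s R) hyt) fun u v huv => ?_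
  have hclass : ∀ {x}, s y x → (s.splitOff R) x y ∨ (s.splitOff R) x t := fun {x} hx => by
    by_cases hxR : x ∈ R
    exacts [.inl ⟨s.symm' hx, iff_of_true hxR hy⟩,
      .inr ⟨s.trans' (s.symm' hx) hyt, iff_of_false hxR ht⟩]
  by_cases hR' : u ∈ R ↔ v ∈ R
  · exact .inl ⟨huv, hR'⟩
  have hyu : s y u := by
    by_cases hu : u ∈ R
    exacts [hR u hu, s.trans' (hR v (by tauto)) (s.symm' huv)]
  exact .inr ⟨hclass hyu, hclass (s.trans' hyu huv)⟩

theorem splitOff_sup_le (hR : ∀ u v, t u v → (u ∈ R ↔ v ∈ R)) :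
    s.splitOff R ⊔ t ≤ (s ⊔ t).splitOff R :=
  sup_le (fun _ _ h => ⟨le_sup_left (b := t) h.1, h.2⟩)
    (fun u v h => ⟨le_sup_right (a := s) h, hR u v h⟩)

end Setoid

section Blocks

variable {n : ℕ} {s : Setoid (Fin n)}

theorem blocks_antitone : Antitone (blocks (n := n)) := fun _ _ h =>
  Nat.card_le_card_of_surjective _ (Setoid.map_of_le_surjective h)

theorem blocks_strictAnti : StrictAnti (blocks (n := n)) := by
  intro s₁ s₂ h
  refine (blocks_antitone h.le).lt_of_ne fun hcard => h.ne ?_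
  have hinj := ((Setoid.map_of_le_surjective h.le).bijective_of_nat_card_le hcard.ge).injective
  exact le_antisymm h.le fun x y hxy => Quotient.exact (@hinj ⟦x⟧ ⟦y⟧ (Quotient.sound hxy))

theorem blocks_mergeClasses {a b : Fin n} (hab : ¬ s a b) :
    blocks (s.mergeClasses a b) + 1 = blocks s := by
  classical
  let f (q : {q : Quotient s // q ≠ ⟦b⟧}) : Quotient (s.mergeClasses a b) :=
    Setoid.map_of_le (s.le_mergeClasses a b) q.1
  have not_rel_b {x : Fin n} (hx : (⟦x⟧ : Quotient s) ≠ ⟦b⟧) : ¬ s x b :=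
    fun h => hx (Quotient.sound h)
  have hf : Function.Bijective f := by
    constructor
    · rintro ⟨q, hq⟩ ⟨r, hr⟩ h
      obtain ⟨x, rfl⟩ := Quotient.mk_surjective q
      obtain ⟨y, rfl⟩ := Quotient.mk_surjective r
      rcases Quotient.exact h with hxy | ⟨hx, hy⟩
      · exact Subtype.ext (Quotient.sound hxy)
      · have hxa := hx.resolve_right (not_rel_b hq)
        have hya := hy.resolve_right (not_rel_b hr)
        exact Subtype.ext (Quotient.sound (s.trans' hxa (s.symm' hya)))
    · refine Quotient.ind fun z => ?_
      by_cases hz : s z b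
      · refine ⟨⟨⟦a⟧, fun h => hab (Quotient.exact h)⟩, Quotient.sound ?_⟩
        exact .inr ⟨.inl (s.refl' a), .inr hz⟩
      · exact ⟨⟨⟦z⟧, fun h => hz (Quotient.exact h)⟩, rfl⟩
  rw [blocks, blocks, ← Nat.card_congr (Equiv.ofBijective f hf), ← Finite.card_option,
    Nat.card_congr (Equiv.optionSubtypeNe (⟦b⟧ : Quotient s))]

theorem blocks_le_blocks_mergeClasses_add_one (s : Setoid (Fin n)) (a b : Fin n) :
    blocks s ≤ blocks (s.mergeClasses a b) + 1 := by
  by_cases hab : s a b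
  · rw [Setoid.mergeClasses_eq_self hab]; omega
  · rw [blocks_mergeClasses hab]

end Blocks

namespace IsNoncrossing

variable {n : ℕ} {π : Setoid (Fin n)} {a b : Fin n}

theorem lt_and_lt_of_rel (hπ : IsNoncrossing π) {c c' x x' : Fin n} (hcc' : π c c')
    (hcx : c < x) (hxc' : x < c') (hxx' : π x x') (hcx' : ¬ π c x) : c < x' ∧ x' < c' := by
  rcases lt_trichotomy x' c with h | rfl | h
  · have hx'c : π x' c := hπ x' c x c' h hcx hxc' (π.symm' hxx') hcc'
    exact absurd (π.trans' (π.symm' hx'c) (π.symm' hxx')) hcx'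
  · exact absurd (π.symm' hxx') hcx'
  rcases lt_trichotomy x' c' with h' | rfl | h'
  · exact ⟨h, h'⟩
  · exact absurd (π.trans' hcc' (π.symm' hxx')) hcx'
  · exact absurd (hπ c x c' x' hcx hxc' h' hcc' hxx') hcx'

theorem splitOff_Ioo (hπ : IsNoncrossing π) (y a b : Fin n) :
    IsNoncrossing (π.splitOff {x | π y x ∧ a < x ∧ x < b}) := by
  rintro x₁ x₂ x₃ x₄ h₁₂ h₂₃ h₃₄ ⟨h₁₃, i₁₃⟩ ⟨h₂₄, i₂₄⟩
  have π₁₂ : π x₁ x₂ := hπ x₁ x₂ x₃ x₄ h₁₂ h₂₃ h₃₄ h₁₃ h₂₄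
  refine ⟨π₁₂, fun h₁ => ?_, fun h₂ => ?_⟩
  · obtain ⟨-, -, h₃b⟩ := i₁₃.1 h₁
    exact ⟨π.trans' h₁.1 π₁₂, h₁.2.1.trans h₁₂, h₂₃.trans h₃b⟩
  · obtain ⟨-, -, h₄b⟩ := i₂₄.1 h₂
    exact i₁₃.2 ⟨π.trans' (π.trans' h₂.1 (π.symm' π₁₂)) h₁₃, h₂.2.1.trans h₂₃, h₃₄.trans h₄b⟩

/-- A block other than those of `a` and `b` cannot cross their union, once the open interval
`(a, b)` is a union of blocks. -/
theorem not_separates_mergeClasses (hπ : IsNoncrossing π) (hab : a < b)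
    (hsat : ∀ y t, a < y → y < b → π y t → a < t ∧ t < b) {c c' u v : Fin n}
    (hcc' : π c c') (hc : ¬ (π c a ∨ π c b)) (hcu : c < u) (huc' : u < c')
    (hv : v < c ∨ c' < v) (hu : π u a ∨ π u b) (hv' : π v a ∨ π v b) : False := by
  have not_rel_c : ∀ {x}, π x a ∨ π x b → ¬ π c x := fun hx hcx =>
    hc (hx.imp (π.trans' hcx) (π.trans' hcx))
  have inside : ∀ {r}, π u r → c < r ∧ r < c' := fun hr =>
    hπ.lt_and_lt_of_rel hcc' hcu huc' hr (not_rel_c hu)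
  have outside : ∀ {r}, (π r a ∨ π r b) → π v r → ¬ (c < r ∧ r < c') := fun hr hvr hr' => by
    have := hπ.lt_and_lt_of_rel hcc' hr'.1 hr'.2 (π.symm' hvr) (not_rel_c hr)
    rcases hv with h | h <;> exact (lt_asymm h) (by tauto)
  have hc_out : ¬ (a < c ∧ c < b) := fun h => by
    have := hsat c c' h.1 h.2 hcc'
    rcases hu with h' | h' <;> have := hsat u _ (by omega) (by omega) h' <;> omega
  have hc'_out : ¬ (a < c' ∧ c' < b) := fun h => hc_out (hsat c' c h.1 h.2 (π.symm' hcc'))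
  have hca : c ≠ a := fun h => hc (.inl (h ▸ π.refl' c))
  have hcb : c ≠ b := fun h => hc (.inr (h ▸ π.refl' c))
  have hc'a : c' ≠ a := fun h => hc (.inl (h ▸ hcc'))
  have hc'b : c' ≠ b := fun h => hc (.inr (h ▸ hcc'))
  rcases hu with hua | hub <;> rcases hv' with hva | hvb
  · exact outside (.inl (π.refl' a)) hva (inside hua)
  · have := inside hua; have := outside (.inr (π.refl' b)) hvb; omega
  · have := inside hub; have := outside (.inl (π.refl' a)) hva; omega
  · exact outside (.inr (π.refl' b)) hvb (inside hub)

theorem mergeClasses (hπ : IsNoncrossing π) (hab : a < b)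
    (hsat : ∀ y t, a < y → y < b → π y t → a < t ∧ t < b) :
    IsNoncrossing (π.mergeClasses a b) := by
  rintro x₁ x₂ x₃ x₄ h₁₂ h₂₃ h₃₄ (h₁₃ | ⟨hx₁, hx₃⟩) (h₂₄ | ⟨hx₂, hx₄⟩)
  · exact .inl (hπ x₁ x₂ x₃ x₄ h₁₂ h₂₃ h₃₄ h₁₃ h₂₄)
  · by_cases hx₁ : π x₁ a ∨ π x₁ b
    · exact .inr ⟨hx₁, hx₂⟩
    · exact (hπ.not_separates_mergeClasses hab hsat h₁₃ hx₁ h₁₂ h₂₃ (.inr h₃₄) hx₂ hx₄).elim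
  · by_cases hx₂ : π x₂ a ∨ π x₂ b
    · exact .inr ⟨hx₁, hx₂⟩
    · exact (hπ.not_separates_mergeClasses hab hsat h₂₄ hx₂ h₂₃ h₃₄ (.inl h₁₂) hx₃ hx₁).elim
  · exact .inr ⟨hx₁, hx₂⟩

end IsNoncrossing

section MinDiscrepancy

variable {n : ℕ} {π ρ : Setoid (Fin n)} {a b : Fin n}

def IsMinDiscrepancy (π ρ : Setoid (Fin n)) (a b : Fin n) : Prop :=
  a < b ∧ ¬ (π a b ↔ ρ a b) ∧
    ∀ u v : Fin n, u < v → ¬ (π u v ↔ ρ u v) → (b : ℕ) - a ≤ (v : ℕ) - u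

theorem exists_isMinDiscrepancy (h : π ≠ ρ) : ∃ a b, IsMinDiscrepancy π ρ a b := by
  classical
  have hex : ∃ k, ∃ a b : Fin n, a < b ∧ ¬ (π a b ↔ ρ a b) ∧ (b : ℕ) - a = k := by
    obtain ⟨u, v, huv⟩ : ∃ u v, ¬ (π u v ↔ ρ u v) := by
      by_contra! h'
      exact h (Setoid.ext h')
    rcases lt_trichotomy u v with h | rfl | h
    · exact ⟨_, u, v, h, huv, rfl⟩
    · exact absurd (iff_of_true (π.refl' u) (ρ.refl' u)) huv
    · exact ⟨_, v, u, h, by rwa [π.comm', ρ.comm'], rfl⟩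
  obtain ⟨a, b, hab, hd, hk⟩ := Nat.find_spec hex
  exact ⟨a, b, hab, hd, fun u v huv hd' => hk ▸ Nat.find_min' hex ⟨u, v, huv, hd', rfl⟩⟩

namespace IsMinDiscrepancy

theorem symm (hmin : IsMinDiscrepancy π ρ a b) : IsMinDiscrepancy ρ π a b :=
  ⟨hmin.1, fun h => hmin.2.1 h.symm, fun u v huv h => hmin.2.2 u v huv fun h' => h h'.symm⟩

theorem not_rel_of_rel (hmin : IsMinDiscrepancy π ρ a b) (hρab : ρ a b) : ¬ π a b :=
  fun hπab => hmin.2.1 (iff_of_true hπab hρab)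

theorem rel_iff_of_le (hmin : IsMinDiscrepancy π ρ a b) {u v : Fin n} (huv : u ≤ v)
    (hlt : (v : ℕ) - u < b - a) : π u v ↔ ρ u v := by
  rcases huv.eq_or_lt with rfl | huv
  · exact iff_of_true (π.refl' u) (ρ.refl' u)
  · by_contra hd
    have := hmin.2.2 u v huv hd
    omega

theorem rel_iff_of_mem_Ioo (hmin : IsMinDiscrepancy π ρ a b) {u v : Fin n} (hau : a < u)
    (hub : u < b) (hav : a < v) (hvb : v < b) : π u v ↔ ρ u v := by
  rcases le_total u v with huv | hvu
  · exact hmin.rel_iff_of_le huv (by omega)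
  · rw [π.comm', ρ.comm']
    exact hmin.rel_iff_of_le hvu (by omega)

theorem not_rel_left (hmin : IsMinDiscrepancy π ρ a b) (hρab : ρ a b) {u : Fin n}
    (hau : a < u) (hub : u < b) : ¬ ρ a u := by
  intro hρau
  have hπau : π a u := (hmin.rel_iff_of_le hau.le (by omega)).2 hρau
  have hπub : π u b := (hmin.rel_iff_of_le hub.le (by omega)).2 (ρ.trans' (ρ.symm' hρau) hρab)
  exact hmin.not_rel_of_rel hρab (π.trans' hπau hπub)

theorem lt_and_lt_of_rel (hmin : IsMinDiscrepancy π ρ a b) (hρ : IsNoncrossing ρ)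
    (hρab : ρ a b) {u t : Fin n} (hau : a < u) (hub : u < b) (hut : ρ u t) : a < t ∧ t < b :=
  hρ.lt_and_lt_of_rel hρab hau hub hut (hmin.not_rel_left hρab hau hub)

end IsMinDiscrepancy

end MinDiscrepancy

section Hasse

variable {n : ℕ} {x z : NC n}

theorem covBy_of_lt_of_blocks_eq (hxz : x.1 < z.1) (h : blocks x.1 = blocks z.1 + 1) :
    x ⋖ z :=
  ⟨hxz, fun c hxc hcz => by
    have := blocks_strictAnti (show x.1 < c.1 from hxc)
    have := blocks_strictAnti (show c.1 < z.1 from hcz)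
    omega⟩

theorem exists_mergeClasses_of_lt (h : x < z) :
    ∃ a b, ¬ x.1 a b ∧ z.1 a b ∧ IsNoncrossing (x.1.mergeClasses a b) := by
  obtain ⟨a, b, hmin⟩ := exists_isMinDiscrepancy (Subtype.coe_injective.ne h.ne)
  have hz : z.1 a b := by
    by_contra hz
    exact hmin.2.1 (iff_of_false (fun hx => hz (h.le hx)) hz)
  refine ⟨a, b, hmin.not_rel_of_rel hz, hz, x.2.mergeClasses hmin.1 fun y t hay hyb hyt => ?_⟩
  exact hmin.lt_and_lt_of_rel z.2 hz hay hyb (h.le hyt)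

theorem CovBy.exists_eq_mergeClasses (h : x ⋖ z) :
    ∃ a b, ¬ x.1 a b ∧ z.1 = x.1.mergeClasses a b := by
  obtain ⟨a, b, hab, hz, hNC⟩ := exists_mergeClasses_of_lt h.lt
  let m : NC n := ⟨_, hNC⟩
  have hxm : x < m := Setoid.lt_mergeClasses hab
  have hmz : m ≤ z := Setoid.mergeClasses_le h.le hz
  have hm : m = z := eq_of_le_of_not_lt hmz (h.2 hxm)
  exact ⟨a, b, hab, congrArg Subtype.val hm.symm⟩

theorem CovBy.blocks_eq (h : x ⋖ z) : blocks x.1 = blocks z.1 + 1 := by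
  obtain ⟨a, b, hab, hz⟩ := h.exists_eq_mergeClasses
  rw [hz, blocks_mergeClasses hab]

theorem CovBy.blocks_sup_le (h : x ⋖ z) (ρ : Setoid (Fin n)) :
    blocks (x.1 ⊔ ρ) ≤ blocks (z.1 ⊔ ρ) + 1 := by
  obtain ⟨a, b, -, hz⟩ := h.exists_eq_mergeClasses
  rw [hz, Setoid.mergeClasses_sup]
  exact blocks_le_blocks_mergeClasses_add_one _ a b

end Hasse

section Gap

variable {n : ℕ}

/-- The truncated subtraction is harmless, see `gap_add`. -/
noncomputable def gap (π ρ : Setoid (Fin n)) : ℕ :=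
  blocks π + blocks ρ - 2 * blocks (π ⊔ ρ)

theorem gap_add (π ρ : Setoid (Fin n)) :
    gap π ρ + 2 * blocks (π ⊔ ρ) = blocks π + blocks ρ := by
  have := blocks_antitone (le_sup_left : π ≤ π ⊔ ρ)
  have := blocks_antitone (le_sup_right : ρ ≤ π ⊔ ρ)
  unfold gap
  omega

theorem gap_comm (π ρ : Setoid (Fin n)) : gap π ρ = gap ρ π := by
  rw [gap, gap, sup_comm, add_comm]

theorem gap_self (ρ : Setoid (Fin n)) : gap ρ ρ = 0 := by
  rw [gap, sup_idem]
  omega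

theorem gap_le_gap_add_one_of_adj {x z : NC n} (h : (hasse n).Adj x z) (ρ : Setoid (Fin n)) :
    gap x.1 ρ ≤ gap z.1 ρ + 1 := by
  have := gap_add x.1 ρ
  have := gap_add z.1 ρ
  rcases h with h | h
  all_goals
    have := h.blocks_eq
    have := h.blocks_sup_le ρ
    have := blocks_antitone (sup_le_sup_right h.le ρ)
    omega

theorem gap_le_gap_add_length {x y : NC n} (ρ : Setoid (Fin n)) (w : (hasse n).Walk x y) :
    gap x.1 ρ ≤ gap y.1 ρ + w.length := by
  induction w with
  | nil => simp
  | cons h _ ih =>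
    have := gap_le_gap_add_one_of_adj h ρ
    rw [SimpleGraph.Walk.length_cons]
    omega

end Gap

section UpperBound

variable {n : ℕ} {π ρ : NC n} {a b : Fin n}

theorem exists_adj_gap_lt_of_forall_rel (hmin : IsMinDiscrepancy π.1 ρ.1 a b) (hρab : ρ.1 a b)
    (hsat : ∀ y t, a < y → y < b → π.1 y t → a < t ∧ t < b) :
    ∃ σ : NC n, (hasse n).Adj π σ ∧ gap σ.1 ρ.1 < gap π.1 ρ.1 := by
  have hπab := hmin.not_rel_of_rel hρab
  let σ : NC n := ⟨_, π.2.mergeClasses hmin.1 hsat⟩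
  have hblocks : blocks σ.1 + 1 = blocks π.1 := blocks_mergeClasses hπab
  have hcov : π ⋖ σ := covBy_of_lt_of_blocks_eq (Setoid.lt_mergeClasses hπab) hblocks.symm
  have hsup : σ.1 ⊔ ρ.1 = π.1 ⊔ ρ.1 := by
    rw [Setoid.mergeClasses_sup, Setoid.mergeClasses_eq_self (le_sup_right (a := π.1) hρab)]
  refine ⟨σ, .inl hcov, ?_⟩
  have := gap_add σ.1 ρ.1
  have := gap_add π.1 ρ.1
  rw [hsup] at *
  omega

theorem exists_adj_gap_lt_of_rel {y t : Fin n} (hmin : IsMinDiscrepancy π.1 ρ.1 a b)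
    (hρab : ρ.1 a b) (hay : a < y) (hyb : y < b) (hyt : π.1 y t) (ht : ¬ (a < t ∧ t < b)) :
    ∃ σ : NC n, (hasse n).Adj π σ ∧ gap σ.1 ρ.1 < gap π.1 ρ.1 := by
  set R : Set (Fin n) := {x | π.1 y x ∧ a < x ∧ x < b}
  have hyR : y ∈ R := ⟨π.1.refl' y, hay, hyb⟩
  have htR : t ∉ R := fun h => ht h.2
  have hR : ∀ u v, ρ.1 u v → u ∈ R → v ∈ R := fun u v huv ⟨hyu, hau, hub⟩ => by
    obtain ⟨hav, hvb⟩ := hmin.lt_and_lt_of_rel ρ.2 hρab hau hub huv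
    exact ⟨π.1.trans' hyu ((hmin.rel_iff_of_mem_Ioo hau hub hav hvb).2 huv), hav, hvb⟩
  let σ : NC n := ⟨_, π.2.splitOff_Ioo y a b⟩
  have hblocks : blocks π.1 + 1 = blocks σ.1 := by
    rw [← Setoid.mergeClasses_splitOff hyt hyR htR fun x hx => hx.1]
    exact blocks_mergeClasses fun h => htR (h.2.1 hyR)
  have hcov : σ ⋖ π := covBy_of_lt_of_blocks_eq
    ((Setoid.splitOff_le _ _).lt_of_ne fun h => htR ((Setoid.ext_iff.1 h y t).2 hyt |>.2.1 hyR))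
    hblocks.symm
  have hsup : σ.1 ⊔ ρ.1 ≤ (π.1 ⊔ ρ.1).splitOff R :=
    Setoid.splitOff_sup_le fun u v h => ⟨hR u v h, hR v u (ρ.1.symm' h)⟩
  have hjoin : blocks (π.1 ⊔ ρ.1) < blocks (σ.1 ⊔ ρ.1) := by
    refine blocks_strictAnti ((sup_le_sup_right hcov.le _).lt_of_ne fun h => htR ?_)
    exact (hsup (h ▸ le_sup_left (b := ρ.1) hyt)).2.1 hyR
  refine ⟨σ, .inr hcov, ?_⟩
  have := gap_add σ.1 ρ.1
  have := gap_add π.1 ρ.1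
  omega

theorem exists_adj_gap_lt (hmin : IsMinDiscrepancy π.1 ρ.1 a b) (hρab : ρ.1 a b) :
    ∃ σ : NC n, (hasse n).Adj π σ ∧ gap σ.1 ρ.1 < gap π.1 ρ.1 := by
  by_cases hsat : ∀ y t, a < y → y < b → π.1 y t → a < t ∧ t < b
  · exact exists_adj_gap_lt_of_forall_rel hmin hρab hsat
  · push Not at hsat
    obtain ⟨y, t, hay, hyb, hyt, ht⟩ := hsat
    exact exists_adj_gap_lt_of_rel hmin hρab hay hyb hyt fun h => (ht h.1).not_gt h.2

theorem exists_walk_length_le_gap (π ρ : NC n) :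
    ∃ w : (hasse n).Walk π ρ, w.length ≤ gap π.1 ρ.1 := by
  induction hk : gap π.1 ρ.1 using Nat.strong_induction_on generalizing π ρ with
  | _ k ih =>
    by_cases hπρ : π = ρ
    · subst hπρ
      exact ⟨.nil, by simp⟩
    obtain ⟨a, b, hmin⟩ := exists_isMinDiscrepancy (Subtype.coe_injective.ne hπρ)
    by_cases hρab : ρ.1 a b
    · obtain ⟨σ, hadj, hlt⟩ := exists_adj_gap_lt hmin hρab
      obtain ⟨w, hw⟩ := ih _ (hk ▸ hlt) σ ρ rfl
      exact ⟨.cons hadj w, by rw [SimpleGraph.Walk.length_cons]; omega⟩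
    · have hπab : π.1 a b := by
        by_contra hπab
        exact hmin.2.1 (iff_of_false hπab hρab)
      obtain ⟨σ, hadj, hlt⟩ := exists_adj_gap_lt hmin.symm hπab
      rw [gap_comm σ.1, gap_comm ρ.1] at hlt
      obtain ⟨w, hw⟩ := ih _ (hk ▸ hlt) π σ rfl
      exact ⟨w.concat hadj.symm, by rw [SimpleGraph.Walk.length_concat]; omega⟩

end UpperBound

theorem dist_eq_gap {n : ℕ} (π ρ : NC n) : (hasse n).dist π ρ = gap π.1 ρ.1 := by
  obtain ⟨w, hw⟩ := exists_walk_length_le_gap π ρ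
  obtain ⟨p, hp⟩ := SimpleGraph.Reachable.exists_walk_length_eq_dist ⟨w⟩
  have := gap_le_gap_add_length ρ.1 p
  have := SimpleGraph.dist_le w
  rw [gap_self] at *
  omega

/-- `d_H(π,ρ) = |π| + |ρ| - 2·|π ∨̃ ρ|`, where `∨̃` is the join in the full lattice
of set partitions (setoids) of `{1,...,n}` (stated additively). -/
theorem dist_eq_blocks_sub_fullJoin (n : ℕ) (π ρ : NC n) :
    (hasse n).dist π ρ + 2 * blocks (π.1 ⊔ ρ.1) = blocks π.1 + blocks ρ.1 := by
  rw [dist_eq_gap]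
  exact gap_add π.1 ρ.1
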